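/- Let h₀(x,p) = −|p|²/2 + a₀(x), h₁(x,p) = a(x) − α p^⊥ with a : ℝ² → ℝ³ smooth, α ∈ ℝ, p^⊥ = (p₂,−p₁,0)ᵀ, and g⁽⁰⁾ = e^{β h₀}, g⁽¹⁾ = β e^{β h₀} h₁. Then the first-order Moyal brackets cancel: h₀ #₁ g_j⁽¹⁾ + (h₁)_j #₁ g⁽⁰⁾ = 0 for each component j = 1,2,3, where f #₁ g = (1/(2i))(∇_p f·∇_x g − ∇_x f·∇_p g). -/

import Mathlib

/-- Scalar symbols on phase space ℝ²×ℝ². -/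
abbrev SSym : Type := (Fin 2 → ℝ) → (Fin 2 → ℝ) → ℝ

/-- Partial derivative in `x`. -/
noncomputable def pdx (k : Fin 2) (f : SSym) : SSym :=
  fun x p => fderiv ℝ (fun y => f y p) x (Pi.single k 1)

/-- Partial derivative in `p`. -/
noncomputable def pdp (k : Fin 2) (f : SSym) : SSym :=
  fun x p => fderiv ℝ (fun q => f x q) p (Pi.single k 1)

/-- `p^⊥ = (p₂, −p₁, 0)`. -/
def pperp (p : Fin 2 → ℝ) : Fin 3 → ℝ := ![p 1, -(p 0), 0]

/-- With `h₀ = −|p|²/2 + a₀(x)`, `h₁ = a(x) − α p^⊥`, `g⁽⁰⁾ = e^{βh₀}`,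
`g⁽¹⁾ = β e^{βh₀} h₁`, the first-order Moyal brackets cancel:
`h₀ #₁ g_j⁽¹⁾ + (h₁)_j #₁ g⁽⁰⁾ = 0` componentwise, where the bracket is
`∇_p f·∇_x g − ∇_x f·∇_p g` (up to the constant factor `1/(2i)`). -/
theorem moyal1_cancellation (a₀ : (Fin 2 → ℝ) → ℝ) (a : (Fin 2 → ℝ) → Fin 3 → ℝ)
    (α β : ℝ) (ha₀ : ContDiff ℝ (⊤ : ℕ∞) a₀) (ha : ContDiff ℝ (⊤ : ℕ∞) a) :
    ∀ (j : Fin 3) (x p : Fin 2 → ℝ),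
      (∑ k, (pdp k (fun y q => -(∑ i, q i ^ 2) / 2 + a₀ y) x p *
              pdx k (fun y q => β * Real.exp (β * (-(∑ i, q i ^ 2) / 2 + a₀ y)) *
                (a y j - α * pperp q j)) x p -
            pdx k (fun y q => -(∑ i, q i ^ 2) / 2 + a₀ y) x p *
              pdp k (fun y q => β * Real.exp (β * (-(∑ i, q i ^ 2) / 2 + a₀ y)) *
                (a y j - α * pperp q j)) x p)) +
      (∑ k, (pdp k (fun y q => a y j - α * pperp q j) x p *
              pdx k (fun y q => Real.exp (β * (-(∑ i, q i ^ 2) / 2 + a₀ y))) x p -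
            pdx k (fun y q => a y j - α * pperp q j) x p *
              pdp k (fun y q => Real.exp (β * (-(∑ i, q i ^ 2) / 2 + a₀ y))) x p)) = 0 := by
  intro j x p
  -- notations
  set E : ℝ := Real.exp (β * (-(∑ i, p i ^ 2) / 2 + a₀ x)) with hE_def
  set H : ℝ := a x j - α * pperp p j with hH_def
  set D0 : (Fin 2 → ℝ) →L[ℝ] ℝ := fderiv ℝ a₀ x with hD0_def
  have hA0 : HasFDerivAt a₀ D0 x := (ha₀.differentiable (by simp) x).hasFDerivAt
  have hAjdiff : DifferentiableAt ℝ (fun y => a y j) x :=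
    differentiableAt_pi.mp (ha.differentiable (by simp) x) j
  set DA : (Fin 2 → ℝ) →L[ℝ] ℝ := fderiv ℝ (fun y => a y j) x with hDA_def
  have hAj : HasFDerivAt (fun y => a y j) DA x := hAjdiff.hasFDerivAt
  -- x-side derivative facts
  have hinx : HasFDerivAt (fun y => -(∑ i, p i ^ 2) / 2 + a₀ y) D0 x :=
    hA0.const_add _
  have hEx : HasFDerivAt (fun y => Real.exp (β * (-(∑ i, p i ^ 2) / 2 + a₀ y)))
      (E • (β • D0)) x := (hinx.const_mul β).exp
  have hHx : HasFDerivAt (fun y => a y j - α * pperp p j) DA x := hAj.sub_const _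
  have hG1x : HasFDerivAt
      (fun y => β * Real.exp (β * (-(∑ i, p i ^ 2) / 2 + a₀ y)) * (a y j - α * pperp p j))
      ((β * E) • DA + H • (β • (E • (β • D0)))) x := (hEx.const_mul β).mul hHx
  -- p-side derivative facts
  have hsq : HasFDerivAt (fun q : Fin 2 → ℝ => ∑ i, q i ^ 2)
      (∑ i : Fin 2, (p i • (ContinuousLinearMap.proj i : (Fin 2 → ℝ) →L[ℝ] ℝ)
        + p i • ContinuousLinearMap.proj i)) p := by
    have : (fun q : Fin 2 → ℝ => ∑ i, q i ^ 2) = fun q => ∑ i, q i * q i := by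
      funext q; simp [sq]
    rw [this]
    exact HasFDerivAt.fun_sum fun i _ => by
      simpa using ((ContinuousLinearMap.proj i : (Fin 2 → ℝ) →L[ℝ] ℝ)).hasFDerivAt (x := p) |>.fun_mul
        ((ContinuousLinearMap.proj i : (Fin 2 → ℝ) →L[ℝ] ℝ)).hasFDerivAt
  set DS : (Fin 2 → ℝ) →L[ℝ] ℝ :=
    (-(1/2) : ℝ) • (∑ i : Fin 2, (p i • (ContinuousLinearMap.proj i : (Fin 2 → ℝ) →L[ℝ] ℝ)
        + p i • ContinuousLinearMap.proj i)) with hDS_def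
  have hinp : HasFDerivAt (fun q : Fin 2 → ℝ => -(∑ i, q i ^ 2) / 2 + a₀ x) DS p := by
    have : (fun q : Fin 2 → ℝ => -(∑ i, q i ^ 2) / 2 + a₀ x)
        = fun q => (-(1/2) : ℝ) * (∑ i, q i ^ 2) + a₀ x := by funext q; ring
    rw [this]
    exact (hsq.const_mul _).add_const _
  have hDSk : ∀ k : Fin 2, DS (Pi.single k 1) = -(p k) := by
    intro k
    fin_cases k <;>
      simp [hDS_def, Fin.sum_univ_two, Pi.single_apply] <;> ring
  have hEp : HasFDerivAt (fun q : Fin 2 → ℝ => Real.exp (β * (-(∑ i, q i ^ 2) / 2 + a₀ x)))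
      (E • (β • DS)) p := (hinp.const_mul β).exp
  obtain ⟨M, hperp, hMk⟩ : ∃ M : (Fin 2 → ℝ) →L[ℝ] ℝ,
      HasFDerivAt (fun q : Fin 2 → ℝ => pperp q j) M p ∧
      ∀ k : Fin 2, M (Pi.single k 1) = pperp (Pi.single k 1) j := by
    fin_cases j
    · exact ⟨(ContinuousLinearMap.proj 1 : (Fin 2 → ℝ) →L[ℝ] ℝ),
        (ContinuousLinearMap.proj 1 : (Fin 2 → ℝ) →L[ℝ] ℝ).hasFDerivAt,
        fun k => rfl⟩
    · exact ⟨-(ContinuousLinearMap.proj 0 : (Fin 2 → ℝ) →L[ℝ] ℝ),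
        ((ContinuousLinearMap.proj 0 : (Fin 2 → ℝ) →L[ℝ] ℝ)).hasFDerivAt.neg,
        fun k => rfl⟩
    · exact ⟨0, hasFDerivAt_const _ _, fun k => rfl⟩
  have hHp : HasFDerivAt (fun q : Fin 2 → ℝ => a x j - α * pperp q j) (-(α • M)) p :=
    (hperp.const_mul α).const_sub _
  have hG1p : HasFDerivAt
      (fun q : Fin 2 → ℝ => β * Real.exp (β * (-(∑ i, q i ^ 2) / 2 + a₀ x))
        * (a x j - α * pperp q j))
      ((β * E) • (-(α • M)) + H • (β • (E • (β • DS)))) p := (hEp.const_mul β).mul hHp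
  -- now compute all eight pd values
  have c1 : ∀ k, pdx k (fun y q => -(∑ i, q i ^ 2) / 2 + a₀ y) x p = D0 (Pi.single k 1) := by
    intro k; show fderiv ℝ (fun y => -(∑ i, p i ^ 2) / 2 + a₀ y) x (Pi.single k 1) = _
    rw [hinx.fderiv]
  have c2 : ∀ k, pdp k (fun y q => -(∑ i, q i ^ 2) / 2 + a₀ y) x p = -(p k) := by
    intro k; show fderiv ℝ (fun q : Fin 2 → ℝ => -(∑ i, q i ^ 2) / 2 + a₀ x) p (Pi.single k 1) = _
    rw [hinp.fderiv, hDSk]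
  have c3 : ∀ k, pdx k (fun y q => β * Real.exp (β * (-(∑ i, q i ^ 2) / 2 + a₀ y)) *
      (a y j - α * pperp q j)) x p
      = (β * E) * DA (Pi.single k 1) + H * (β * (E * (β * D0 (Pi.single k 1)))) := by
    intro k
    show fderiv ℝ (fun y => β * Real.exp (β * (-(∑ i, p i ^ 2) / 2 + a₀ y))
        * (a y j - α * pperp p j)) x (Pi.single k 1) = _
    rw [hG1x.fderiv]; simp
  have c4 : ∀ k, pdp k (fun y q => β * Real.exp (β * (-(∑ i, q i ^ 2) / 2 + a₀ y)) *
      (a y j - α * pperp q j)) x p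
      = (β * E) * (-(α * pperp (Pi.single k 1) j)) + H * (β * (E * (β * (-(p k))))) := by
    intro k
    show fderiv ℝ (fun q : Fin 2 → ℝ => β * Real.exp (β * (-(∑ i, q i ^ 2) / 2 + a₀ x))
        * (a x j - α * pperp q j)) p (Pi.single k 1) = _
    rw [hG1p.fderiv]; simp [hDSk, hMk]
  have c5 : ∀ k, pdx k (fun y q => a y j - α * pperp q j) x p = DA (Pi.single k 1) := by
    intro k; show fderiv ℝ (fun y => a y j - α * pperp p j) x (Pi.single k 1) = _
    rw [hHx.fderiv]
  have c6 : ∀ k, pdp k (fun y q => a y j - α * pperp q j) x p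
      = -(α * pperp (Pi.single k 1) j) := by
    intro k; show fderiv ℝ (fun q : Fin 2 → ℝ => a x j - α * pperp q j) p (Pi.single k 1) = _
    rw [hHp.fderiv]; simp [hMk]
  have c7 : ∀ k, pdx k (fun y q => Real.exp (β * (-(∑ i, q i ^ 2) / 2 + a₀ y))) x p
      = E * (β * D0 (Pi.single k 1)) := by
    intro k
    show fderiv ℝ (fun y => Real.exp (β * (-(∑ i, p i ^ 2) / 2 + a₀ y))) x (Pi.single k 1) = _
    rw [hEx.fderiv]; simp
  have c8 : ∀ k, pdp k (fun y q => Real.exp (β * (-(∑ i, q i ^ 2) / 2 + a₀ y))) x p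
      = E * (β * (-(p k))) := by
    intro k
    show fderiv ℝ (fun q : Fin 2 → ℝ => Real.exp (β * (-(∑ i, q i ^ 2) / 2 + a₀ x)))
      p (Pi.single k 1) = _
    rw [hEp.fderiv]; simp [hDSk]
  rw [← Finset.sum_add_distrib]
  apply Finset.sum_eq_zero
  intro k _
  rw [c1 k, c2 k, c3 k, c4 k, c5 k, c6 k, c7 k, c8 k]
  ring
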